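/- Under the standing assumptions on the coefficients (Lipschitz γ_α, μ_α, H functions with γ_α(0)=0, positive rates), the initial value problem for the three-dimensional tumor–host–matrix ODE system admits a unique global solution φ ∈ C([0,∞); ℝ³) for every initial datum φ⁰ ≥ 0 with ‖φ⁰‖₁ ≤ 1, and this solution satisfies φ(t) ≥ 0 and ‖φ(t)‖₁ ≤ 1 for all t ≥ 0. -/

import Mathlib

/-!
Clamping each coordinate to `[0, 1]` turns the vector field into a bounded, globally Lipschitz
one, which has a global solution by Picard–Lindelöf on `[-n, n]` and gluing. The field does not
point out of the simplex `φ ≥ 0, φT + φH + φM ≤ 1`: on a face `φα = 0` the `α`-equation is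
`0` or nonnegative, and once `φT + φH + φM ≥ 1 ≥ ψα` all growth terms `Hα(ψα - ψ)` vanish,
leaving only losses. A barrier argument keeps the clamped solution in the simplex, where the clamp
is the identity, so it solves the original system. Uniqueness holds because the original field
is locally Lipschitz, hence Lipschitz on the compact set swept out by two solutions on `[0, t]`.
-/

open Set

section Calculus

variable {E F : Type*} [NormedAddCommGroup E] [NormedSpace ℝ E]
  [NormedAddCommGroup F] [NormedSpace ℝ F] {f : ℝ → E × F} {f' : E × F} {s : Set ℝ} {x : ℝ}

theorem HasDerivAt.fst (h : HasDerivAt f f' x) : HasDerivAt (fun t => (f t).1) f'.1 x :=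
  (ContinuousLinearMap.fst ℝ E F).hasFDerivAt.comp_hasDerivAt x h

theorem HasDerivAt.snd (h : HasDerivAt f f' x) : HasDerivAt (fun t => (f t).2) f'.2 x :=
  (ContinuousLinearMap.snd ℝ E F).hasFDerivAt.comp_hasDerivAt x h

theorem HasDerivWithinAt.fst (h : HasDerivWithinAt f f' s x) :
    HasDerivWithinAt (fun t => (f t).1) f'.1 s x :=
  (ContinuousLinearMap.fst ℝ E F).hasFDerivAt.comp_hasDerivWithinAt x h

theorem HasDerivWithinAt.snd (h : HasDerivWithinAt f f' s x) :
    HasDerivWithinAt (fun t => (f t).2) f'.2 s x :=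
  (ContinuousLinearMap.snd ℝ E F).hasFDerivAt.comp_hasDerivWithinAt x h

end Calculus

theorem LocallyLipschitz.mul' {α : Type*} [PseudoMetricSpace α] {f g : α → ℝ}
    (hf : LocallyLipschitz f) (hg : LocallyLipschitz g) :
    LocallyLipschitz fun x => f x * g x :=
  (contDiff_mul (𝕜 := ℝ) (n := 1)).locallyLipschitz.comp (hf.prodMk hg)

theorem nonneg_of_hasDerivAt_of_neg_imp {g g' : ℝ → ℝ} {a b : ℝ}
    (hg : ContinuousOn g (Icc a b)) (hg' : ∀ t ∈ Ioo a b, HasDerivAt g (g' t) t)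
    (ha : 0 ≤ g a) (hneg : ∀ t ∈ Ioo a b, g t < 0 → 0 ≤ g' t) :
    ∀ t ∈ Icc a b, 0 ≤ g t := by
  intro t ht
  by_contra! hgt
  set Z := Icc a t ∩ g ⁻¹' Ici 0
  have hZ : IsCompact Z := isCompact_Icc.of_isClosed_subset
    ((hg.mono (Icc_subset_Icc_right ht.2)).preimage_isClosed_of_isClosed isClosed_Icc
      isClosed_Ici) inter_subset_left
  -- `c` is the last time before `t` at which `g ≥ 0`; the mean value theorem on `[c, t]` fails.
  obtain ⟨c, ⟨hc, hgc⟩, hcmax⟩ := hZ.exists_isGreatest ⟨a, ⟨le_rfl, ht.1⟩, ha⟩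
  have hct : c < t := lt_of_le_of_ne hc.2 (by rintro rfl; exact (not_le.2 hgt) hgc)
  obtain ⟨ξ, hξ, hslope⟩ := exists_hasDerivAt_eq_slope g g' hct
    (hg.mono (Icc_subset_Icc hc.1 ht.2))
    (fun x hx => hg' x ⟨hc.1.trans_lt hx.1, hx.2.trans_le ht.2⟩)
  have hgξ : g ξ < 0 := by
    by_contra! h
    exact (not_le.2 hξ.1) (hcmax ⟨⟨hc.1.trans hξ.1.le, hξ.2.le⟩, h⟩)
  have := hneg ξ ⟨hc.1.trans_lt hξ.1, hξ.2.trans_le ht.2⟩ hgξ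
  rw [hslope] at this
  exact (not_le.2 (div_neg_of_neg_of_pos (by simp at hgc; linarith) (sub_pos.2 hct))) this

section ODE

variable {E : Type*} [NormedAddCommGroup E] [NormedSpace ℝ E] {v : E → E}

theorem LipschitzWith.exists_forall_hasDerivAt [CompleteSpace E] {K : NNReal}
    (hv : LipschitzWith K v) {C : ℝ} (hC : ∀ x, ‖v x‖ ≤ C) (x₀ : E) :
    ∃ f : ℝ → E, f 0 = x₀ ∧ ∀ t, HasDerivAt f (v (f t)) t := by
  have hPL (n : ℕ) : IsPicardLindelof (fun _ => v) (tmin := -n) (tmax := n) ⟨0, by simp⟩ x₀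
      (C.toNNReal * n) 0 C.toNNReal K :=
    .of_time_independent (fun x _ => (hC x).trans (Real.le_coe_toNNReal C)) hv.lipschitzOnWith
      (by simp)
  choose F hF0 hF using fun n => (hPL n).exists_eq_forall_mem_Icc_hasDerivWithinAt₀
  have hFd (n : ℕ) {t : ℝ} (ht : |t| < n) : HasDerivAt (F n) (v (F n t)) t := by
    rw [abs_lt] at ht
    exact (hF n t ⟨ht.1.le, ht.2.le⟩).hasDerivAt (Icc_mem_nhds ht.1 ht.2)
  have hagree {n m : ℕ} (hnm : n ≤ m) {t : ℝ} (ht : |t| < n) : F n t = F m t := by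
    have hn : (0 : ℝ) < n := (abs_nonneg t).trans_lt ht
    have hm : (n : ℝ) ≤ m := by exact_mod_cast hnm
    refine ODE_solution_unique_of_mem_Ioo (v := fun _ => v) (s := fun _ => univ)
      (fun _ _ => hv.lipschitzOnWith) (t₀ := 0) ⟨neg_neg_of_pos hn, hn⟩
      (fun s hs => ⟨hFd n (abs_lt.2 hs), trivial⟩)
      (fun s hs => ⟨hFd m (abs_lt.2 ⟨by linarith [hs.1], by linarith [hs.2]⟩), trivial⟩)
      ((hF0 n).trans (hF0 m).symm) (abs_lt.1 ht)
  set f : ℝ → E := fun t => F (⌈|t|⌉₊ + 1) t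
  have hfF (n : ℕ) {t : ℝ} (ht : |t| < n) : f t = F n t := by
    have hlt : |t| < ((⌈|t|⌉₊ + 1 : ℕ) : ℝ) := by push_cast; linarith [Nat.le_ceil |t|]
    rcases le_total (⌈|t|⌉₊ + 1) n with h | h
    · exact hagree h hlt
    · exact (hagree h ht).symm
  refine ⟨f, (hfF 1 (t := 0) (by simp)).trans (hF0 1), fun t => ?_⟩
  obtain ⟨N, hN⟩ := exists_nat_gt |t|
  have hev : f =ᶠ[nhds t] F N :=
    Filter.eventually_of_mem ((isOpen_lt continuous_abs continuous_const).mem_nhds hN)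
      fun s hs => hfF N hs
  rw [hfF N hN]
  exact (hFd N hN).congr_of_eventuallyEq hev

theorem ODE_solution_unique_Ici_of_locallyLipschitz (hv : LocallyLipschitz v) {f g : ℝ → E}
    {a : ℝ} (hf : ∀ t ∈ Ici a, HasDerivWithinAt f (v (f t)) (Ici a) t)
    (hg : ∀ t ∈ Ici a, HasDerivWithinAt g (v (g t)) (Ici a) t) (ha : f a = g a) :
    EqOn f g (Ici a) := by
  intro b hb
  have hcont {h : ℝ → E} (hh : ∀ t ∈ Ici a, HasDerivWithinAt h (v (h t)) (Ici a) t) :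
      ContinuousOn h (Icc a b) :=
    fun t ht => (hh t ht.1).continuousWithinAt.mono Icc_subset_Ici_self
  set s := f '' Icc a b ∪ g '' Icc a b
  obtain ⟨K, hK⟩ := hv.locallyLipschitzOn.exists_lipschitzOnWith_of_compact
    ((isCompact_Icc.image_of_continuousOn (hcont hf)).union
      (isCompact_Icc.image_of_continuousOn (hcont hg)))
  refine ODE_solution_unique_of_mem_Icc_right (v := fun _ => v) (s := fun _ => s)
    (fun _ _ => hK) (hcont hf) (fun t ht => (hf t ht.1).mono (Ici_subset_Ici.2 ht.1))
    (fun t ht => Or.inl (mem_image_of_mem f (Ico_subset_Icc_self ht))) (hcont hg)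
    (fun t ht => (hg t ht.1).mono (Ici_subset_Ici.2 ht.1))
    (fun t ht => Or.inr (mem_image_of_mem g (Ico_subset_Icc_self ht))) ha ⟨hb, le_rfl⟩

end ODE

namespace TumorHostMatrix

def clampUnit (x : ℝ) : ℝ := max 0 (min x 1)

lemma clampUnit_nonneg (x : ℝ) : 0 ≤ clampUnit x := le_max_left _ _

lemma clampUnit_le_one (x : ℝ) : clampUnit x ≤ 1 := max_le zero_le_one (min_le_right _ _)

lemma clampUnit_of_nonpos {x : ℝ} (hx : x ≤ 0) : clampUnit x = 0 := by
  simp [clampUnit, hx]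

lemma clampUnit_of_mem {x : ℝ} (hx : x ∈ Icc 0 1) : clampUnit x = x := by
  simp [clampUnit, hx.1, hx.2]

lemma one_le_clampUnit_add {x y z : ℝ} (h : 1 ≤ x + y + z) :
    1 ≤ clampUnit x + clampUnit y + clampUnit z := by
  simp only [clampUnit, max_def, min_def]
  split_ifs <;> linarith

def clampCube (p : ℝ × ℝ × ℝ) : ℝ × ℝ × ℝ :=
  (clampUnit p.1, clampUnit p.2.1, clampUnit p.2.2)

lemma lipschitzWith_clampCube : LipschitzWith 1 clampCube := by
  have hc : LipschitzWith 1 clampUnit := (LipschitzWith.id.min_const 1).const_max 0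
  have := (hc.comp LipschitzWith.prod_fst).prodMk
    ((hc.comp (LipschitzWith.prod_fst.comp LipschitzWith.prod_snd)).prodMk
      (hc.comp (LipschitzWith.prod_snd.comp LipschitzWith.prod_snd)))
  simp only [mul_one, max_self] at this
  exact this

lemma clampCube_mem_Icc (p : ℝ × ℝ × ℝ) : clampCube p ∈ Icc 0 1 := by
  simp [clampCube, Prod.le_def, clampUnit_nonneg, clampUnit_le_one]

def solidSimplex : Set (ℝ × ℝ × ℝ) :=
  {p | 0 ≤ p.1 ∧ 0 ≤ p.2.1 ∧ 0 ≤ p.2.2 ∧ p.1 + p.2.1 + p.2.2 ≤ 1}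

lemma clampCube_of_mem_solidSimplex {p : ℝ × ℝ × ℝ} (hp : p ∈ solidSimplex) :
    clampCube p = p := by
  obtain ⟨h1, h2, h3, hs⟩ := hp
  simp only [clampCube, clampUnit_of_mem ⟨h1, by linarith⟩, clampUnit_of_mem ⟨h2, by linarith⟩,
    clampUnit_of_mem ⟨h3, by linarith⟩]

/-- Required on the whole cube `[0, 1]³`, where the clamped solution lives, and not only on
`solidSimplex`. -/
def InwardOnSimplex (w : ℝ × ℝ × ℝ → ℝ × ℝ × ℝ) : Prop :=
  ∀ p ∈ Icc (0 : ℝ × ℝ × ℝ) 1,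
    (p.1 = 0 → 0 ≤ (w p).1) ∧ (p.2.1 = 0 → 0 ≤ (w p).2.1) ∧ (p.2.2 = 0 → 0 ≤ (w p).2.2) ∧
    (1 ≤ p.1 + p.2.1 + p.2.2 → (w p).1 + (w p).2.1 + (w p).2.2 ≤ 0)

section

variable {w : ℝ × ℝ × ℝ → ℝ × ℝ × ℝ}

lemma exists_forall_hasDerivAt_comp_clampCube (hw : LocallyLipschitz w) (x₀ : ℝ × ℝ × ℝ) :
    ∃ f : ℝ → ℝ × ℝ × ℝ, f 0 = x₀ ∧ ∀ t, HasDerivAt f (w (clampCube (f t))) t := by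
  obtain ⟨K, hK⟩ := hw.locallyLipschitzOn.exists_lipschitzOnWith_of_compact
    (isCompact_Icc (a := (0 : ℝ × ℝ × ℝ)) (b := 1))
  obtain ⟨C, hC⟩ := (isCompact_Icc (a := (0 : ℝ × ℝ × ℝ)) (b := 1)).exists_bound_of_continuousOn
    hw.continuous.continuousOn
  have hlip : LipschitzWith K (w ∘ clampCube) := LipschitzWith.of_dist_le_mul fun x y => by
    simpa using (hK.dist_le_mul _ (clampCube_mem_Icc x) _ (clampCube_mem_Icc y)).trans
      (mul_le_mul_of_nonneg_left (lipschitzWith_clampCube.dist_le_mul x y) K.2)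
  exact hlip.exists_forall_hasDerivAt (fun x => hC _ (clampCube_mem_Icc x)) x₀

lemma mem_solidSimplex_of_hasDerivAt_comp_clampCube (hw : InwardOnSimplex w)
    {f : ℝ → ℝ × ℝ × ℝ} (hf : ∀ t, HasDerivAt f (w (clampCube (f t))) t)
    (h0 : f 0 ∈ solidSimplex) {t : ℝ} (ht : 0 ≤ t) : f t ∈ solidSimplex := by
  have barrier {g g' : ℝ → ℝ} (hg : ∀ t, HasDerivAt g (g' t) t) (hg0 : 0 ≤ g 0)
      (hneg : ∀ t, g t < 0 → 0 ≤ g' t) : 0 ≤ g t :=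
    nonneg_of_hasDerivAt_of_neg_imp (HasDerivAt.continuousOn fun s _ => hg s)
      (fun s _ => hg s) hg0 (fun s _ => hneg s) t ⟨ht, le_rfl⟩
  have hw' (s : ℝ) := hw _ (clampCube_mem_Icc (f s))
  obtain ⟨h1, h2, h3, hsum⟩ := h0
  refine ⟨barrier (fun s => (hf s).fst) h1 fun s hs => (hw' s).1 (clampUnit_of_nonpos hs.le),
    barrier (fun s => (hf s).snd.fst) h2 fun s hs => (hw' s).2.1 (clampUnit_of_nonpos hs.le),
    barrier (fun s => (hf s).snd.snd) h3 fun s hs => (hw' s).2.2.1 (clampUnit_of_nonpos hs.le),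
    ?_⟩
  have := barrier (g := fun s => 1 - ((f s).1 + (f s).2.1 + (f s).2.2))
    (fun s => (((hf s).fst.add (hf s).snd.fst).add (hf s).snd.snd).const_sub 1) (by linarith)
    fun s hs => by linarith [(hw' s).2.2.2 (one_le_clampUnit_add (by linarith))]
  linarith

theorem exists_solution_mem_solidSimplex (hlip : LocallyLipschitz w) (hin : InwardOnSimplex w)
    {x₀ : ℝ × ℝ × ℝ} (hx₀ : x₀ ∈ solidSimplex) :
    ∃ f : ℝ → ℝ × ℝ × ℝ, f 0 = x₀ ∧
      ∀ t, 0 ≤ t → f t ∈ solidSimplex ∧ HasDerivAt f (w (f t)) t := by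
  obtain ⟨f, hf0, hf⟩ := exists_forall_hasDerivAt_comp_clampCube hlip x₀
  have hmem {t : ℝ} (ht : 0 ≤ t) : f t ∈ solidSimplex :=
    mem_solidSimplex_of_hasDerivAt_comp_clampCube hin hf (hf0 ▸ hx₀) ht
  exact ⟨f, hf0, fun t ht => ⟨hmem ht, clampCube_of_mem_solidSimplex (hmem ht) ▸ hf t⟩⟩

end

structure Coefficients where
  (γT γH μT μH HT HH HM : ℝ → ℝ)
  (δT δH δT' δH' νT νH ψT ψH ψM mT mH : ℝ)

namespace Coefficients

variable (c : Coefficients)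

/-- The right-hand side at `p = (φT, φH, φM)`. -/
def field (p : ℝ × ℝ × ℝ) : ℝ × ℝ × ℝ :=
  ((c.γT p.2.2 * c.HT (c.ψT - (p.1 + p.2.1 + p.2.2)) - c.δT - c.δT' * c.HM (c.mT - p.2.2)) * p.1,
   (c.γH p.2.2 * c.HH (c.ψH - (p.1 + p.2.1 + p.2.2)) - c.δH - c.δH' * c.HM (c.mH - p.2.2)) *
      p.2.1,
   (c.μT p.2.2 * c.HM (c.ψM - (p.1 + p.2.1 + p.2.2)) - c.νT * p.2.2) * p.1 +
     (c.μH p.2.2 * c.HM (c.ψM - (p.1 + p.2.1 + p.2.2)) - c.νH * p.2.2) * p.2.1)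

lemma locallyLipschitz_field (hγT : LocallyLipschitz c.γT) (hγH : LocallyLipschitz c.γH)
    (hμT : LocallyLipschitz c.μT) (hμH : LocallyLipschitz c.μH) (hHT : LocallyLipschitz c.HT)
    (hHH : LocallyLipschitz c.HH) (hHM : LocallyLipschitz c.HM) :
    LocallyLipschitz c.field := by
  have hT : LocallyLipschitz fun p : ℝ × ℝ × ℝ => p.1 := LipschitzWith.prod_fst.locallyLipschitz
  have hH : LocallyLipschitz fun p : ℝ × ℝ × ℝ => p.2.1 :=
    (LipschitzWith.prod_fst.comp LipschitzWith.prod_snd).locallyLipschitz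
  have hM : LocallyLipschitz fun p : ℝ × ℝ × ℝ => p.2.2 :=
    (LipschitzWith.prod_snd.comp LipschitzWith.prod_snd).locallyLipschitz
  have hcomp {H : ℝ → ℝ} (hH : LocallyLipschitz H) {g : ℝ × ℝ × ℝ → ℝ}
      (hg : LocallyLipschitz g) (a : ℝ) : LocallyLipschitz fun p => H (a - g p) :=
    hH.comp ((LocallyLipschitz.const a).sub hg)
  have hS := (hT.add hH).add hM
  have hconst (a : ℝ) : LocallyLipschitz fun _ : ℝ × ℝ × ℝ => a := .const a
  have hfT : LocallyLipschitz fun p => (c.field p).1 :=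
    ((((hγT.comp hM).mul' (hcomp hHT hS _)).sub (hconst _)).sub
      ((hconst _).mul' (hcomp hHM hM _))).mul' hT
  have hfH : LocallyLipschitz fun p => (c.field p).2.1 :=
    ((((hγH.comp hM).mul' (hcomp hHH hS _)).sub (hconst _)).sub
      ((hconst _).mul' (hcomp hHM hM _))).mul' hH
  have hfM : LocallyLipschitz fun p => (c.field p).2.2 :=
    ((((hμT.comp hM).mul' (hcomp hHM hS _)).sub ((hconst _).mul' hM)).mul' hT).add
      ((((hμH.comp hM).mul' (hcomp hHM hS _)).sub ((hconst _).mul' hM)).mul' hH)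
  exact hfT.prodMk (hfH.prodMk hfM)

lemma inwardOnSimplex_field (hψT : c.ψT ≤ 1) (hψH : c.ψH ≤ 1) (hψM : c.ψM ≤ 1)
    (hδT : 0 ≤ c.δT) (hδH : 0 ≤ c.δH) (hδT' : 0 ≤ c.δT') (hδH' : 0 ≤ c.δH')
    (hνT : 0 ≤ c.νT) (hνH : 0 ≤ c.νH) (hμT : 0 ≤ c.μT 0) (hμH : 0 ≤ c.μH 0)
    (hHM : ∀ s, 0 ≤ c.HM s) (hHT₀ : ∀ s ≤ 0, c.HT s = 0) (hHH₀ : ∀ s ≤ 0, c.HH s = 0)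
    (hHM₀ : ∀ s ≤ 0, c.HM s = 0) :
    InwardOnSimplex c.field := by
  rintro p ⟨⟨h1, h2, h3⟩, -⟩
  simp only [Prod.fst_zero, Prod.snd_zero] at h1 h2 h3
  refine ⟨fun h => by simp [field, h], fun h => by simp [field, h], fun h => ?_, fun h => ?_⟩
  · simp only [field, h, mul_zero, sub_zero]
    exact add_nonneg (mul_nonneg (mul_nonneg hμT (hHM _)) h1)
      (mul_nonneg (mul_nonneg hμH (hHM _)) h2)
  · simp only [field, hHT₀ _ (by linarith : c.ψT - (p.1 + p.2.1 + p.2.2) ≤ 0),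
      hHH₀ _ (by linarith : c.ψH - (p.1 + p.2.1 + p.2.2) ≤ 0),
      hHM₀ _ (by linarith : c.ψM - (p.1 + p.2.1 + p.2.2) ≤ 0)]
    nlinarith [mul_nonneg hδT h1, mul_nonneg (mul_nonneg hδT' (hHM (c.mT - p.2.2))) h1,
      mul_nonneg hδH h2, mul_nonneg (mul_nonneg hδH' (hHM (c.mH - p.2.2))) h2,
      mul_nonneg (mul_nonneg hνT h3) h1, mul_nonneg (mul_nonneg hνH h3) h2]

end Coefficients

end TumorHostMatrix

theorem tumor_host_matrix_wellposedness_general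
    (γT γH μT μH HT HH HM : ℝ → ℝ)
    (δT δH δT' δH' νT νH ψT ψH ψM mT mH : ℝ)
    (hψT : ψT ∈ Set.Icc (0:ℝ) 1) (hψH : ψH ∈ Set.Icc (0:ℝ) 1)
    (hψM : ψM ∈ Set.Icc (0:ℝ) 1)
    (hδT : 0 < δT) (hδH : 0 < δH) (hδT' : 0 < δT') (hδH' : 0 < δH')
    (hνT : 0 < νT) (hνH : 0 < νH)
    (hγnn : ∀ s ∈ Set.Icc (0:ℝ) 1, 0 ≤ γT s ∧ 0 ≤ γH s ∧ 0 ≤ μT s ∧ 0 ≤ μH s)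
    (hLipγ : ∃ L : NNReal, LipschitzWith L γT ∧ LipschitzWith L γH ∧
      LipschitzWith L μT ∧ LipschitzWith L μH)
    (hLipH : ∃ L : NNReal, LipschitzWith L HT ∧ LipschitzWith L HH ∧ LipschitzWith L HM)
    (hHrange : ∀ s, HT s ∈ Set.Icc (0:ℝ) 1 ∧ HH s ∈ Set.Icc (0:ℝ) 1 ∧
      HM s ∈ Set.Icc (0:ℝ) 1)
    (hHvanish : ∀ s ≤ (0:ℝ), HT s = 0 ∧ HH s = 0 ∧ HM s = 0)
    -- initial datum: φ⁰ ≥ 0 with ‖φ⁰‖₁ ≤ 1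
    (φT0 φH0 φM0 : ℝ)
    (hinit : 0 ≤ φT0 ∧ 0 ≤ φH0 ∧ 0 ≤ φM0 ∧ φT0 + φH0 + φM0 ≤ 1) :
    ∃ φT φH φM : ℝ → ℝ,
      -- existence of a global solution attaining the initial datum
      (φT 0 = φT0 ∧ φH 0 = φH0 ∧ φM 0 = φM0) ∧
      (∀ t : ℝ, 0 ≤ t →
        HasDerivWithinAt φT
          ((γT (φM t) * HT (ψT - (φT t + φH t + φM t)) - δT -
            δT' * HM (mT - φM t)) * φT t) (Set.Ici 0) t ∧
        HasDerivWithinAt φH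
          ((γH (φM t) * HH (ψH - (φT t + φH t + φM t)) - δH -
            δH' * HM (mH - φM t)) * φH t) (Set.Ici 0) t ∧
        HasDerivWithinAt φM
          ((μT (φM t) * HM (ψM - (φT t + φH t + φM t)) - νT * φM t) * φT t +
           (μH (φM t) * HM (ψM - (φT t + φH t + φM t)) - νH * φM t) * φH t)
          (Set.Ici 0) t) ∧
      -- the solution is nonnegative with ‖φ(t)‖₁ ≤ 1 (hence continuous on [0,∞))
      (∀ t : ℝ, 0 ≤ t →
        0 ≤ φT t ∧ 0 ≤ φH t ∧ 0 ≤ φM t ∧ φT t + φH t + φM t ≤ 1) ∧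
      -- uniqueness among all such solutions
      (∀ χT χH χM : ℝ → ℝ,
        (χT 0 = φT0 ∧ χH 0 = φH0 ∧ χM 0 = φM0) →
        (∀ t : ℝ, 0 ≤ t →
          HasDerivWithinAt χT
            ((γT (χM t) * HT (ψT - (χT t + χH t + χM t)) - δT -
              δT' * HM (mT - χM t)) * χT t) (Set.Ici 0) t ∧
          HasDerivWithinAt χH
            ((γH (χM t) * HH (ψH - (χT t + χH t + χM t)) - δH -
              δH' * HM (mH - χM t)) * χH t) (Set.Ici 0) t ∧
          HasDerivWithinAt χM
            ((μT (χM t) * HM (ψM - (χT t + χH t + χM t)) - νT * χM t) * χT t +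
             (μH (χM t) * HM (ψM - (χT t + χH t + χM t)) - νH * χM t) * χH t)
            (Set.Ici 0) t) →
        ∀ t : ℝ, 0 ≤ t → χT t = φT t ∧ χH t = φH t ∧ χM t = φM t) := by
  obtain ⟨Lγ, hγT, hγH, hμT, hμH⟩ := hLipγ
  obtain ⟨LH, hHT, hHH, hHM⟩ := hLipH
  let c : TumorHostMatrix.Coefficients :=
    ⟨γT, γH, μT, μH, HT, HH, HM, δT, δH, δT', δH', νT, νH, ψT, ψH, ψM, mT, mH⟩
  have hlip : LocallyLipschitz c.field := c.locallyLipschitz_field hγT.locallyLipschitz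
    hγH.locallyLipschitz hμT.locallyLipschitz hμH.locallyLipschitz hHT.locallyLipschitz
    hHH.locallyLipschitz hHM.locallyLipschitz
  have hμ₀ := hγnn 0 ⟨le_rfl, zero_le_one⟩
  have hin : TumorHostMatrix.InwardOnSimplex c.field := c.inwardOnSimplex_field hψT.2 hψH.2
    hψM.2 hδT.le hδH.le hδT'.le hδH'.le hνT.le hνH.le hμ₀.2.2.1 hμ₀.2.2.2
    (fun s => (hHrange s).2.2.1) (fun s hs => (hHvanish s hs).1) (fun s hs => (hHvanish s hs).2.1)
    (fun s hs => (hHvanish s hs).2.2)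
  obtain ⟨f, hf0, hf⟩ := TumorHostMatrix.exists_solution_mem_solidSimplex hlip hin
    (x₀ := (φT0, φH0, φM0)) hinit
  refine ⟨fun t => (f t).1, fun t => (f t).2.1, fun t => (f t).2.2, by simp [hf0],
    fun t ht => ?_, fun t ht => (hf t ht).1, fun χT χH χM hχ0 hχ t ht => ?_⟩
  · have hd := (hf t ht).2.hasDerivWithinAt (s := Ici 0)
    exact ⟨hd.fst, hd.snd.fst, hd.snd.snd⟩
  · have huniq := ODE_solution_unique_Ici_of_locallyLipschitz hlip
      (f := fun t => (χT t, χH t, χM t)) (g := f)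
      (fun s hs => have ⟨h1, h2, h3⟩ := hχ s hs; h1.prodMk (h2.prodMk h3))
      (fun s hs => (hf s hs).2.hasDerivWithinAt) (by simp [hf0, hχ0]) ht
    simpa only [Prod.ext_iff] using huniq

/-- Well-posedness (existence, uniqueness, global nonnegative bounded solution)
for the spatially homogeneous tumor–host–matrix system. -/
theorem tumor_host_matrix_wellposedness
    (γT γH μT μH HT HH HM : ℝ → ℝ)
    (δT δH δT' δH' νT νH ψT ψH ψM mT mH : ℝ)
    (hψT : ψT ∈ Set.Icc (0:ℝ) 1) (hψH : ψH ∈ Set.Icc (0:ℝ) 1)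
    (hψM : ψM ∈ Set.Icc (0:ℝ) 1)
    (hmT : mT ∈ Set.Icc (0:ℝ) 1) (hmH : mH ∈ Set.Icc (0:ℝ) 1)
    (hδT : 0 < δT) (hδH : 0 < δH) (hδT' : 0 < δT') (hδH' : 0 < δH')
    (hνT : 0 < νT) (hνH : 0 < νH)
    (hγnn : ∀ s ∈ Set.Icc (0:ℝ) 1, 0 ≤ γT s ∧ 0 ≤ γH s ∧ 0 ≤ μT s ∧ 0 ≤ μH s)
    (hγT0 : γT 0 = 0) (hγH0 : γH 0 = 0)
    (hγTmono : MonotoneOn γT (Set.Icc 0 1)) (hγHmono : MonotoneOn γH (Set.Icc 0 1))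
    (hμTanti : AntitoneOn μT (Set.Icc 0 1)) (hμHanti : AntitoneOn μH (Set.Icc 0 1))
    (hLipγ : ∃ L : NNReal, LipschitzWith L γT ∧ LipschitzWith L γH ∧
      LipschitzWith L μT ∧ LipschitzWith L μH)
    (hLipH : ∃ L : NNReal, LipschitzWith L HT ∧ LipschitzWith L HH ∧ LipschitzWith L HM)
    (hHrange : ∀ s, HT s ∈ Set.Icc (0:ℝ) 1 ∧ HH s ∈ Set.Icc (0:ℝ) 1 ∧
      HM s ∈ Set.Icc (0:ℝ) 1)
    (hHvanish : ∀ s ≤ (0:ℝ), HT s = 0 ∧ HH s = 0 ∧ HM s = 0)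
    -- initial datum: φ⁰ ≥ 0 with ‖φ⁰‖₁ ≤ 1
    (φT0 φH0 φM0 : ℝ)
    (hinit : 0 ≤ φT0 ∧ 0 ≤ φH0 ∧ 0 ≤ φM0 ∧ φT0 + φH0 + φM0 ≤ 1) :
    ∃ φT φH φM : ℝ → ℝ,
      -- existence of a global solution attaining the initial datum
      (φT 0 = φT0 ∧ φH 0 = φH0 ∧ φM 0 = φM0) ∧
      (∀ t : ℝ, 0 ≤ t →
        HasDerivWithinAt φT
          ((γT (φM t) * HT (ψT - (φT t + φH t + φM t)) - δT -
            δT' * HM (mT - φM t)) * φT t) (Set.Ici 0) t ∧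
        HasDerivWithinAt φH
          ((γH (φM t) * HH (ψH - (φT t + φH t + φM t)) - δH -
            δH' * HM (mH - φM t)) * φH t) (Set.Ici 0) t ∧
        HasDerivWithinAt φM
          ((μT (φM t) * HM (ψM - (φT t + φH t + φM t)) - νT * φM t) * φT t +
           (μH (φM t) * HM (ψM - (φT t + φH t + φM t)) - νH * φM t) * φH t)
          (Set.Ici 0) t) ∧
      -- the solution is nonnegative with ‖φ(t)‖₁ ≤ 1 (hence continuous on [0,∞))
      (∀ t : ℝ, 0 ≤ t →
        0 ≤ φT t ∧ 0 ≤ φH t ∧ 0 ≤ φM t ∧ φT t + φH t + φM t ≤ 1) ∧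
      -- uniqueness among all such solutions
      (∀ χT χH χM : ℝ → ℝ,
        (χT 0 = φT0 ∧ χH 0 = φH0 ∧ χM 0 = φM0) →
        (∀ t : ℝ, 0 ≤ t →
          HasDerivWithinAt χT
            ((γT (χM t) * HT (ψT - (χT t + χH t + χM t)) - δT -
              δT' * HM (mT - χM t)) * χT t) (Set.Ici 0) t ∧
          HasDerivWithinAt χH
            ((γH (χM t) * HH (ψH - (χT t + χH t + χM t)) - δH -
              δH' * HM (mH - χM t)) * χH t) (Set.Ici 0) t ∧
          HasDerivWithinAt χM
            ((μT (χM t) * HM (ψM - (χT t + χH t + χM t)) - νT * χM t) * χT t +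
             (μH (χM t) * HM (ψM - (χT t + χH t + χM t)) - νH * χM t) * χH t)
            (Set.Ici 0) t) →
        ∀ t : ℝ, 0 ≤ t → χT t = φT t ∧ χH t = φH t ∧ χM t = φM t) :=
  tumor_host_matrix_wellposedness_general γT γH μT μH HT HH HM δT δH δT' δH' νT νH ψT ψH ψM mT mH
    hψT hψH hψM hδT hδH hδT' hδH' hνT hνH hγnn hLipγ hLipH hHrange hHvanish φT0 φH0 φM0 hinit
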